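/- arXiv:2406.07095 — 7 statements merged into one kernel-verified Lean document; each statement's English description precedes it below -/
import Mathlib

section
/- In a quasi-forest, every path whose intermediate elements are all unnamed (not roots) and whose first and last elements are roots is a basic path: precisely, if ρ = a·ρ̄·b where a, b are roots and ρ̄ is a (possibly empty) sequence of non-root elements, then either ρ̄ is empty (ρ is direct), or all elements of ρ̄ are descendants of a and b = a (roundtrip), or all elements of ρ̄ are descendants of a and b is a nominal root (inout), or all elements of ρ̄ are descendants of b and a is a nominal root (outin), or there is a root c such that all elements of ρ̄ are descendants of c and both a and b are nominal roots (bypass). -/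
def NForest (F : Set (List ℕ)) : Prop :=
  (∀ w ∈ F, w ≠ []) ∧ ∀ w ∈ F, ∀ u : List ℕ, u ≠ [] → u <+: w → u ∈ F

def StrictPrefix (u w : List ℕ) : Prop := u <+: w ∧ u ≠ w

def RootsSet (F : Set (List ℕ)) : Set (List ℕ) := {w ∈ F | w.length = 1}

def IsChild (d e : List ℕ) : Prop := ∃ n : ℕ, e = d ++ [n]

def EdgeCond (F O : Set (List ℕ)) (E : List ℕ → List ℕ → Prop) : Prop :=
  ∀ d e, d ∈ F → e ∈ F → E d e →
    (d ∈ RootsSet F ∧ e ∈ RootsSet F) ∨ d ∈ O ∨ e ∈ O ∨ d = e ∨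
      IsChild d e ∨ IsChild e d

/-! All interior elements of such a path lie in one tree: an edge between two non-roots is a
self-loop or a parent–child edge, so it preserves the root `x.take 1`. Call that root `c`. At
either end, the edge joining a root `r` to the interior is either incident to a nominal root, which
must be `r` since interior elements are not roots, or it is again a self-loop or parent–child edge,
forcing `r = c`. The four combinations give the roundtrip, inout, outin and bypass cases. -/

variable {F O : Set (List ℕ)} {E : List ℕ → List ℕ → Prop} {d e x a : List ℕ}

theorem IsChild.take_one_eq (h : IsChild d e) (hd : d ≠ []) : e.take 1 = d.take 1 := by
  obtain ⟨n, rfl⟩ := h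
  exact List.take_append_of_le_length (List.length_pos_iff.mpr hd)

theorem take_one_mem_rootsSet (hF : NForest F) (hx : x ∈ F) : x.take 1 ∈ RootsSet F := by
  have hpos : 0 < x.length := List.length_pos_iff.mpr (hF.1 x hx)
  have hlen : (x.take 1).length = 1 := by rw [List.length_take]; omega
  refine ⟨hF.2 x hx _ ?_ (List.take_prefix 1 x), hlen⟩
  exact List.ne_nil_of_length_pos (by omega)

theorem strictPrefix_take_one (hF : NForest F) (hx : x ∈ F) (hxr : x ∉ RootsSet F) :
    StrictPrefix (x.take 1) x := by
  refine ⟨List.take_prefix 1 x, fun h => hxr ?_⟩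
  rw [← h]
  exact take_one_mem_rootsSet hF hx

theorem EdgeCond.take_one_eq (hF : NForest F) (hE : EdgeCond F O E) (hd : d ∈ F) (he : e ∈ F)
    (hde : E d e) (hroots : ¬(d ∈ RootsSet F ∧ e ∈ RootsSet F)) (hdO : d ∉ O) (heO : e ∉ O) :
    d.take 1 = e.take 1 := by
  rcases hE d e hd he hde with h | h | h | rfl | h | h
  · exact absurd h hroots
  · exact absurd h hdO
  · exact absurd h heO
  · rfl
  · exact (h.take_one_eq (hF.1 d hd)).symm
  · exact h.take_one_eq (hF.1 e he)

theorem EdgeCond.exists_take_one_eq_of_isChain (hF : NForest F) (hO : O ⊆ RootsSet F)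
    (hE : EdgeCond F O E) {l : List (List ℕ)} (hl : l.IsChain E) (hlF : ∀ x ∈ l, x ∈ F)
    (hlr : ∀ x ∈ l, x ∉ RootsSet F) : ∃ c, ∀ x ∈ l, x.take 1 = c := by
  rcases eq_or_ne l [] with rfl | hne
  · exact ⟨[], by simp⟩
  have hstep : l.IsChain fun x y => x.take 1 = y.take 1 :=
    hl.imp_of_mem_imp fun x y hx hy hxy =>
      hE.take_one_eq hF (hlF x hx) (hlF y hy) hxy (fun h => hlr x hx h.1)
        (fun h => hlr x hx (hO h)) (fun h => hlr y hy (hO h))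
  exact ⟨_, hstep.induction (fun x => x.take 1 = (l.head hne).take 1) l
    (fun _ _ hxy hx => hxy.symm.trans hx) (fun _ => rfl)⟩

theorem EdgeCond.mem_or_take_one_eq_of_adj (hF : NForest F) (hO : O ⊆ RootsSet F)
    (hE : EdgeCond F O E) (ha : a ∈ RootsSet F) (hx : x ∈ F) (hxr : x ∉ RootsSet F)
    (hax : E a x ∨ E x a) : a ∈ O ∨ x.take 1 = a := by
  by_cases haO : a ∈ O
  · exact Or.inl haO
  have hxO : x ∉ O := fun h => hxr (hO h)
  have htake : x.take 1 = a.take 1 := by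
    rcases hax with h | h
    · exact (hE.take_one_eq hF ha.1 hx h (fun h => hxr h.2) haO hxO).symm
    · exact hE.take_one_eq hF hx ha.1 h (fun h => hxr h.1) hxO haO
  exact Or.inr (htake.trans (List.take_of_length_le ha.2.le))

/-- Observation: in a quasi-forest, a path `a · ρ̄ · b` whose interior `ρ̄`
consists of non-roots and whose endpoints `a, b` are roots is basic: it is
direct, a roundtrip, an inout, an outin, or a bypass. -/
theorem stmt5 (F O : Set (List ℕ)) (E : List ℕ → List ℕ → Prop)
    (hF : NForest F) (hO : O ⊆ RootsSet F) (hE : EdgeCond F O E)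
    (a b : List ℕ) (ρ' : List (List ℕ))
    (hpath : List.Chain' E (a :: (ρ' ++ [b])))
    (hmem : ∀ x ∈ a :: (ρ' ++ [b]), x ∈ F)
    (ha : a ∈ RootsSet F) (hb : b ∈ RootsSet F)
    (hint : ∀ x ∈ ρ', x ∉ RootsSet F) :
    ρ' = [] ∨
    ((∀ x ∈ ρ', StrictPrefix a x) ∧ b = a) ∨
    ((∀ x ∈ ρ', StrictPrefix a x) ∧ b ∈ O) ∨
    ((∀ x ∈ ρ', StrictPrefix b x) ∧ a ∈ O) ∨
    (∃ c ∈ RootsSet F, (∀ x ∈ ρ', StrictPrefix c x) ∧ a ∈ O ∧ b ∈ O) := by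
  rcases eq_or_ne ρ' [] with rfl | hne
  · exact Or.inl rfl
  right
  have hpath' : ((a :: ρ') ++ [b]).IsChain E := hpath
  obtain ⟨hchain, -, hlast⟩ := List.isChain_append.mp hpath'
  have hρF : ∀ x ∈ ρ', x ∈ F := fun x hx => hmem x (by simp [hx])
  obtain ⟨c, hc⟩ := hE.exists_take_one_eq_of_isChain hF hO hchain.tail hρF hint
  have hfirst := ρ'.head_mem hne
  have hfinal := ρ'.getLast_mem hne
  have hcroot : c ∈ RootsSet F := hc _ hfirst ▸ take_one_mem_rootsSet hF (hρF _ hfirst)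
  have hsp : ∀ x ∈ ρ', StrictPrefix c x := fun x hx =>
    hc x hx ▸ strictPrefix_take_one hF (hρF x hx) (hint x hx)
  have hA : a ∈ O ∨ c = a := hc _ hfirst ▸
    hE.mem_or_take_one_eq_of_adj hF hO ha (hρF _ hfirst) (hint _ hfirst)
      (Or.inl (hchain.rel_head? (by simp [List.head?_eq_some_head hne])))
  have hB : b ∈ O ∨ c = b := hc _ hfinal ▸
    hE.mem_or_take_one_eq_of_adj hF hO hb (hρF _ hfinal) (hint _ hfinal)
      (Or.inr (hlast _ (by simp [List.getLast?_cons, List.getLast?_eq_some_getLast hne]) _ rfl))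
  rcases hA with haO | rfl <;> rcases hB with hbO | rfl
  · exact Or.inr (Or.inr (Or.inr ⟨c, hcroot, hsp, haO, hbO⟩))
  · exact Or.inr (Or.inr (Or.inl ⟨hsp, haO⟩))
  · exact Or.inr (Or.inl ⟨hsp, hbO⟩)
  · exact Or.inl ⟨hsp, rfl⟩
end

section
/- In a quasi-forest, every path starting from a root is decomposable: there exist indices 1 = i₁ < i₂ < … < i_k = |ρ| such that each segment ρ_{i_j}…ρ_{i_{j+1}} is a basic path, where the basic paths are: direct paths (two roots connected by an edge), a-inner paths (root a followed by descendants of a), a-roundtrips (root a, descendants of a, then a again), (a,o)-inout paths (a-inner path followed by a nominal root o), (a,o)-outin paths (reverses of inouts), (a,o)-inner paths (nominal root o followed by descendants of a), and (a,o,o')-bypass paths (nominal root o, then descendants of some root a, then nominal root o'). -/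
/-- The segment of the path `ρ` from position `s` to position `t` is a basic
path: direct, inner, roundtrip, inout, outin, nominal-inner, or bypass. -/
def IsBasicSeg (F O : Set (List ℕ)) (ρ : ℕ → List ℕ) (s t : ℕ) : Prop :=
  s < t ∧ (
    -- direct
    (t = s + 1 ∧ ρ s ∈ RootsSet F ∧ ρ t ∈ RootsSet F) ∨
    -- a-inner
    (ρ s ∈ RootsSet F ∧ ∀ i, s < i → i ≤ t → StrictPrefix (ρ s) (ρ i)) ∨
    -- a-roundtrip
    (ρ s ∈ RootsSet F ∧ ρ t = ρ s ∧
      ∀ i, s < i → i < t → StrictPrefix (ρ s) (ρ i)) ∨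
    -- (a,o)-inout
    (ρ s ∈ RootsSet F ∧ ρ t ∈ O ∧
      ∀ i, s < i → i < t → StrictPrefix (ρ s) (ρ i)) ∨
    -- (a,o)-outin
    (ρ s ∈ O ∧ ρ t ∈ RootsSet F ∧
      ∀ i, s < i → i < t → StrictPrefix (ρ t) (ρ i)) ∨
    -- (a,o)-inner
    (ρ s ∈ O ∧ ∃ a ∈ RootsSet F, ∀ i, s < i → i ≤ t → StrictPrefix a (ρ i)) ∨
    -- (a,o,o')-bypass
    (ρ s ∈ O ∧ ρ t ∈ O ∧
      ∃ a ∈ RootsSet F, ∀ i, s < i → i < t → StrictPrefix a (ρ i)))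

/-!
Cut the path at its visits to roots. From a root the path either steps directly to another
root, or it enters the subtree of some root `a` (the root it stands on, unless that one is
nominal). Inside the strict subtree of `a`, an edge can only stay inside, climb back to `a`, or
jump to a nominal root, since parent–child edges preserve the root and every other edge has a
root or a nominal endpoint. So the excursion ends with the path (an inner path), at `a` (a
roundtrip or outin) or at a nominal root (an inout or bypass), and in the last two cases the
path stands on a root again.
-/

theorem StrictPrefix.length_lt {u w : List ℕ} (h : StrictPrefix u w) : u.length < w.length :=
  lt_of_le_of_ne h.1.length_le fun hl => h.2 (h.1.eq_of_length hl)

theorem strictPrefix_append_singleton (u : List ℕ) (n : ℕ) : StrictPrefix u (u ++ [n]) :=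
  ⟨List.prefix_append _ _, by simp⟩

section QuasiForest

variable {F O : Set (List ℕ)} {E : List ℕ → List ℕ → Prop}

theorem NForest.exists_root_strictPrefix (hF : NForest F) {w : List ℕ} (hw : w ∈ F)
    (hnr : w ∉ RootsSet F) : w.take 1 ∈ RootsSet F ∧ StrictPrefix (w.take 1) w := by
  have hlen : 2 ≤ w.length := by
    have := List.length_pos_iff.mpr (hF.1 w hw)
    have : w.length ≠ 1 := fun h => hnr ⟨hw, h⟩
    omega
  have hlen1 : (w.take 1).length = 1 := by simp only [List.length_take]; omega
  refine ⟨⟨hF.2 w hw _ (List.ne_nil_of_length_eq_add_one hlen1) (List.take_prefix 1 w), hlen1⟩,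
    List.take_prefix 1 w, fun h => ?_⟩
  rw [h] at hlen1
  omega

theorem not_strictPrefix_root {a w : List ℕ} (ha : a ∈ RootsSet F) (hw : w ∈ RootsSet F) :
    ¬ StrictPrefix a w := fun h => by
  have := h.length_lt
  rw [ha.2, hw.2] at this
  exact lt_irrefl 1 this

theorem EdgeCond.exists_root_of_edge_from_root (hF : NForest F) (hO : O ⊆ RootsSet F)
    (hE : EdgeCond F O E) {d e : List ℕ} (hd : d ∈ RootsSet F) (he : e ∈ F)
    (hnr : e ∉ RootsSet F) (hde : E d e) :
    ∃ a ∈ RootsSet F, StrictPrefix a e ∧ (d ∈ O ∨ a = d) := by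
  rcases hE d e hd.1 he hde with ⟨-, her⟩ | hdO | heO | rfl | ⟨n, rfl⟩ | ⟨n, rfl⟩
  · exact absurd her hnr
  · obtain ⟨hroot, hbelow⟩ := hF.exists_root_strictPrefix he hnr
    exact ⟨_, hroot, hbelow, .inl hdO⟩
  · exact absurd (hO heO) hnr
  · exact absurd hd hnr
  · exact ⟨d, hd, strictPrefix_append_singleton d n, .inr rfl⟩
  · have := hd.2
    simp only [List.length_append, List.length_singleton, Nat.add_eq_right,
      List.length_eq_zero_iff] at this
    exact absurd this (hF.1 e he)

theorem EdgeCond.of_edge_below_root (hF : NForest F) (hO : O ⊆ RootsSet F)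
    (hE : EdgeCond F O E) {a d e : List ℕ} (ha : a ∈ RootsSet F) (had : StrictPrefix a d)
    (hd : d ∈ F) (he : e ∈ F) (hde : E d e) :
    e ∈ O ∨ StrictPrefix a e ∨ e = a := by
  rcases hE d e hd he hde with ⟨hdr, -⟩ | hdO | heO | rfl | ⟨n, rfl⟩ | ⟨n, rfl⟩
  · exact absurd had (not_strictPrefix_root ha hdr)
  · exact absurd had (not_strictPrefix_root ha (hO hdO))
  · exact .inl heO
  · exact .inr (.inl had)
  · refine .inr (.inl ⟨had.1.trans (List.prefix_append _ _), fun h => ?_⟩)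
    have := had.length_lt
    rw [h, List.length_append] at this
    omega
  · have hae : a <+: e := by
      refine List.prefix_of_prefix_length_le had.1 (List.prefix_append _ _) ?_
      rw [ha.2]
      exact List.length_pos_iff.mpr (hF.1 e he)
    by_cases h : e = a
    · exact .inr (.inr h)
    · exact .inr (.inl ⟨hae, Ne.symm h⟩)

end QuasiForest

theorem Nat.forall_Ioc_or_exists_first_failure {P : ℕ → Prop} {s K : ℕ} (hs : P (s + 1)) :
    (∀ i, s < i → i ≤ K → P i) ∨
      ∃ t, s < t ∧ t < K ∧ (∀ i, s < i → i ≤ t → P i) ∧ ¬ P (t + 1) := by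
  classical
  by_cases hall : ∀ i, s < i → i ≤ K → P i
  · exact .inl hall
  have hfail : ∃ u, s < u ∧ u ≤ K ∧ ¬ P u := by push Not at hall; exact hall
  obtain ⟨hsu, huK, hnP⟩ := Nat.find_spec hfail
  have hsu' : s + 1 < Nat.find hfail := lt_of_le_of_ne hsu fun h => hnP (h ▸ hs)
  refine .inr ⟨Nat.find hfail - 1, by omega, by omega, fun i hsi hit => ?_, ?_⟩
  · by_contra hnPi
    exact Nat.find_min hfail (by omega) ⟨hsi, by omega, hnPi⟩
  · rwa [Nat.sub_add_cancel (by omega)]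

section Paths

variable {F O : Set (List ℕ)} {E : List ℕ → List ℕ → Prop} {ρ : ℕ → List ℕ} {K : ℕ}

theorem exists_exit_below_root (hF : NForest F) (hO : O ⊆ RootsSet F) (hE : EdgeCond F O E)
    (hstep : ∀ i < K, ρ i ∈ F ∧ ρ (i + 1) ∈ F ∧ E (ρ i) (ρ (i + 1)))
    {a : List ℕ} (ha : a ∈ RootsSet F) {s : ℕ} (hbelow : StrictPrefix a (ρ (s + 1))) :
    (∀ i, s < i → i ≤ K → StrictPrefix a (ρ i)) ∨
      ∃ t, s < t ∧ t ≤ K ∧ (∀ i, s < i → i < t → StrictPrefix a (ρ i)) ∧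
        (ρ t ∈ O ∨ ρ t = a) := by
  rcases Nat.forall_Ioc_or_exists_first_failure (P := fun i => StrictPrefix a (ρ i)) (K := K)
      hbelow with hall | ⟨t, hst, htK, hbelow_t, hexit⟩
  · exact .inl hall
  obtain ⟨hmem, hmem', hedge⟩ := hstep t htK
  refine .inr ⟨t + 1, by omega, htK, fun i hsi hit => hbelow_t i hsi (by omega), ?_⟩
  rcases hE.of_edge_below_root hF hO ha (hbelow_t t hst le_rfl) hmem hmem' hedge with
    h | h | h
  · exact .inl h
  · exact absurd h hexit
  · exact .inr h

theorem exists_isBasicSeg_from_root (hF : NForest F) (hO : O ⊆ RootsSet F)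
    (hE : EdgeCond F O E) (hstep : ∀ i < K, ρ i ∈ F ∧ ρ (i + 1) ∈ F ∧ E (ρ i) (ρ (i + 1)))
    {s : ℕ} (hsK : s < K) (hs : ρ s ∈ RootsSet F) :
    ∃ t, s < t ∧ t ≤ K ∧ IsBasicSeg F O ρ s t ∧ (t = K ∨ ρ t ∈ RootsSet F) := by
  obtain ⟨-, hmem, hedge⟩ := hstep s hsK
  by_cases hnext : ρ (s + 1) ∈ RootsSet F
  · exact ⟨s + 1, by omega, hsK, ⟨by omega, .inl ⟨rfl, hs, hnext⟩⟩, .inr hnext⟩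
  obtain ⟨a, ha, hbelow, hsO | rfl⟩ :=
    hE.exists_root_of_edge_from_root hF hO hs hmem hnext hedge
  · rcases exists_exit_below_root hF hO hE hstep ha hbelow with
      hall | ⟨t, hst, htK, hbelow_t, htO | rfl⟩
    · exact ⟨K, hsK, le_rfl, ⟨hsK, .inr <| .inr <| .inr <| .inr <| .inr <| .inl
        ⟨hsO, a, ha, hall⟩⟩, .inl rfl⟩
    · exact ⟨t, hst, htK, ⟨hst, .inr <| .inr <| .inr <| .inr <| .inr <| .inr
        ⟨hsO, htO, a, ha, hbelow_t⟩⟩, .inr (hO htO)⟩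
    · exact ⟨t, hst, htK, ⟨hst, .inr <| .inr <| .inr <| .inr <| .inl
        ⟨hsO, ha, hbelow_t⟩⟩, .inr ha⟩
  · rcases exists_exit_below_root hF hO hE hstep ha hbelow with
      hall | ⟨t, hst, htK, hbelow_t, htO | hta⟩
    · exact ⟨K, hsK, le_rfl, ⟨hsK, .inr <| .inl ⟨ha, hall⟩⟩, .inl rfl⟩
    · exact ⟨t, hst, htK, ⟨hst, .inr <| .inr <| .inr <| .inl
        ⟨ha, htO, hbelow_t⟩⟩, .inr (hO htO)⟩
    · exact ⟨t, hst, htK, ⟨hst, .inr <| .inr <| .inl ⟨ha, hta, hbelow_t⟩⟩, hta ▸ .inr ha⟩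

def basicSegRel (F O : Set (List ℕ)) (ρ : ℕ → List ℕ) : SetRel ℕ ℕ :=
  {p | IsBasicSeg F O ρ p.1 p.2}

theorem exists_basicSeg_relSeries (hF : NForest F) (hO : O ⊆ RootsSet F)
    (hE : EdgeCond F O E) (hstep : ∀ i < K, ρ i ∈ F ∧ ρ (i + 1) ∈ F ∧ E (ρ i) (ρ (i + 1)))
    {s : ℕ} (hsK : s ≤ K) (hs : ρ s ∈ RootsSet F) :
    ∃ p : RelSeries (basicSegRel F O ρ), p.head = s ∧ p.last = K := by
  rcases hsK.eq_or_lt with rfl | hsK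
  · exact ⟨RelSeries.singleton _ s, rfl, rfl⟩
  obtain ⟨t, hst, htK, hseg, rfl | ht⟩ := exists_isBasicSeg_from_root hF hO hE hstep hsK hs
  · exact ⟨(RelSeries.singleton _ t).cons s hseg, rfl, rfl⟩
  obtain ⟨p, hpt, hpK⟩ := exists_basicSeg_relSeries hF hO hE hstep htK ht
  exact ⟨p.cons s (hpt ▸ hseg), by simp, by simpa using hpK⟩
termination_by K - s

end Paths

theorem stmt6_general (F O : Set (List ℕ)) (E : List ℕ → List ℕ → Prop)
    (hF : NForest F) (hO : O ⊆ RootsSet F) (hE : EdgeCond F O E)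
    (k : ℕ) (ρ : ℕ → List ℕ)
    (hmem : ∀ i < k, ρ i ∈ F)
    (hpath : ∀ i, i + 1 < k → E (ρ i) (ρ (i + 1)))
    (hstart : ρ 0 ∈ RootsSet F) :
    ∃ m : ℕ, ∃ idx : Fin (m + 1) → ℕ,
      StrictMono idx ∧ idx 0 = 0 ∧ idx (Fin.last m) = k - 1 ∧
      ∀ j : Fin m, IsBasicSeg F O ρ (idx j.castSucc) (idx j.succ) := by
  obtain ⟨p, hp0, hpK⟩ := exists_basicSeg_relSeries hF hO hE (K := k - 1)
    (fun i hi => ⟨hmem i (by omega), hmem (i + 1) (by omega), hpath i (by omega)⟩)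
    (Nat.zero_le _) hstart
  exact ⟨p.length, p, Fin.strictMono_iff_lt_succ.mpr fun j => (p.step j).1, hp0, hpK, p.step⟩

/-- Lemma 4 (basic decomposition of paths): in a quasi-forest, every path
starting from a root is decomposable into basic paths. -/
theorem stmt6 (F O : Set (List ℕ)) (E : List ℕ → List ℕ → Prop)
    (hF : NForest F) (hO : O ⊆ RootsSet F) (hE : EdgeCond F O E)
    (k : ℕ) (hk : 1 ≤ k) (ρ : ℕ → List ℕ)
    (hmem : ∀ i < k, ρ i ∈ F)
    (hpath : ∀ i, i + 1 < k → E (ρ i) (ρ (i + 1)))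
    (hstart : ρ 0 ∈ RootsSet F) :
    ∃ m : ℕ, ∃ idx : Fin (m + 1) → ℕ,
      StrictMono idx ∧ idx 0 = 0 ∧ idx (Fin.last m) = k - 1 ∧
      ∀ j : Fin m, IsBasicSeg F O ρ (idx j.castSucc) (idx j.succ) :=
  stmt6_general F O E hF hO hE k ρ hmem hpath hstart
end

section
/- Fix a quasi-forest and a relation E on its elements. Suppose every element d that is NOT a root and satisfies ∃A_{q,q'} (i.e., there is an E-path from d realizing the NFA A from state q to q') witnesses this either via a path fully contained in the subtree of d's root, or via an outer path from d to some root r followed by a path from r realizing A from some intermediate state q̂ to q'. If additionally the concepts Reach_{q,q'} hold exactly at the roots satisfying ∃A_{q,q'}, then for every element d: d satisfies ∃A_{q,q'} if and only if d is a root labeled Reach_{q,q'}, or d is a non-root with a nameless realizing path, or d is a non-root with an outer path realizing A from q to some q̂ ending at a root labeled Reach_{q̂,q'}. -/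
/-- One step in an edge-labeled graph synchronized with an NFA transition. -/
def AStep {V Q A : Type} (edge : V → A → V → Prop) (δ : Q → A → Q → Prop) :
    V × Q → V × Q → Prop :=
  fun p p' => ∃ σ, edge p.1 σ p'.1 ∧ δ p.2 σ p'.2

/-- A synchronized step whose target is not a root (nameless step). -/
def NStep {V Q A : Type} (R : Set V) (edge : V → A → V → Prop)
    (δ : Q → A → Q → Prop) : V × Q → V × Q → Prop :=
  fun p p' => AStep edge δ p p' ∧ p'.1 ∉ R

/-- `d` satisfies `∃ A_{q,q'}.⊤`: some path from `d` realises the NFA from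
state `q` to state `q'`. -/
def SatA {V Q A : Type} (edge : V → A → V → Prop) (δ : Q → A → Q → Prop)
    (d : V) (q q' : Q) : Prop :=
  ∃ e : V, Relation.ReflTransGen (AStep edge δ) (d, q) (e, q')

/-- `d` has a nameless realising path (no roots anywhere on the path). -/
def NamelessSat {V Q A : Type} (R : Set V) (edge : V → A → V → Prop)
    (δ : Q → A → Q → Prop) (d : V) (q q' : Q) : Prop :=
  d ∉ R ∧ ∃ e : V, Relation.ReflTransGen (NStep R edge δ) (d, q) (e, q')

/-- There is an outer path from `d` to the root `r`: a nameless path followed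
by a single step into `r`, realising the NFA from `q` to `qh`. -/
def OuterTo {V Q A : Type} (R : Set V) (edge : V → A → V → Prop)
    (δ : Q → A → Q → Prop) (d : V) (q qh : Q) (r : V) : Prop :=
  r ∈ R ∧ ∃ e qe, Relation.ReflTransGen (NStep R edge δ) (d, q) (e, qe) ∧
    AStep edge δ (e, qe) (r, qh)

section Paths

variable {V Q A : Type} {R : Set V} {edge : V → A → V → Prop} {δ : Q → A → Q → Prop}

theorem NStep.aStep {p p' : V × Q} (h : NStep R edge δ p p') : AStep edge δ p p' :=
  h.1

theorem Relation.ReflTransGen.aStep_of_nStep {p p' : V × Q}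
    (h : Relation.ReflTransGen (NStep R edge δ) p p') :
    Relation.ReflTransGen (AStep edge δ) p p' :=
  Relation.ReflTransGen.mono (fun _ _ => NStep.aStep) _ _ h

theorem NamelessSat.satA {d : V} {q q' : Q} (h : NamelessSat R edge δ d q q') :
    SatA edge δ d q q' :=
  let ⟨_, e, hpath⟩ := h
  ⟨e, hpath.aStep_of_nStep⟩

theorem OuterTo.satA_trans {d r : V} {q qh q' : Q} (hout : OuterTo R edge δ d q qh r)
    (hr : SatA edge δ r qh q') : SatA edge δ d q q' :=
  let ⟨_, _, _, hpath, hstep⟩ := hout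
  let ⟨f, hrest⟩ := hr
  ⟨f, (hpath.aStep_of_nStep.tail hstep).trans hrest⟩

end Paths

/-- Lemma 7 (relativisation of automata concepts): if every non-root
satisfying `∃A_{q,q'}` witnesses it via a nameless path or via an outer path
to a root satisfying the remainder, and `Reach` labels exactly the roots
satisfying `∃A_{q,q'}`, then satisfaction of `∃A_{q,q'}` is equivalent to its
relativisation. -/
theorem stmt7 {V Q A : Type} (R : Set V) (edge : V → A → V → Prop)
    (δ : Q → A → Q → Prop) (Reach : Q → Q → V → Prop)
    (hReach : ∀ (r : V) (q q' : Q), Reach q q' r ↔ (r ∈ R ∧ SatA edge δ r q q'))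
    (hdecomp : ∀ (d : V) (q q' : Q), d ∉ R → SatA edge δ d q q' →
      NamelessSat R edge δ d q q' ∨
        ∃ qh r, OuterTo R edge δ d q qh r ∧ SatA edge δ r qh q') :
    ∀ (d : V) (q q' : Q),
      SatA edge δ d q q' ↔
        (d ∈ R ∧ Reach q q' d) ∨
        (d ∉ R ∧ NamelessSat R edge δ d q q') ∨
        (d ∉ R ∧ ∃ qh r, OuterTo R edge δ d q qh r ∧ Reach qh q' r) := by
  intro d q q'
  constructor
  · intro hsat
    by_cases hd : d ∈ R
    · exact Or.inl ⟨hd, (hReach d q q').2 ⟨hd, hsat⟩⟩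
    rcases hdecomp d q q' hd hsat with hnameless | ⟨qh, r, hout, hr⟩
    · exact Or.inr (Or.inl ⟨hd, hnameless⟩)
    · exact Or.inr (Or.inr ⟨hd, qh, r, hout, (hReach r qh q').2 ⟨hout.1, hr⟩⟩)
  · rintro (⟨-, hd⟩ | ⟨-, hnameless⟩ | ⟨-, qh, r, hout, hr⟩)
    · exact ((hReach d q q').1 hd).2
    · exact hnameless.satA
    · exact hout.satA_trans ((hReach r qh q').1 hr).2
end

section
/- Let A be an NFA with state set Q over an alphabet Σ, and let G be an edge-labeled graph over a vertex set V with a distinguished finite subset R ⊆ V (roots). Let B be the 'guided NFA' on state set Q ∪ Q_skull (a disjoint copy) whose transitions are labeled by fresh 'shortcut' edge labels, where each shortcut label encodes a pair of states of A, and suppose the shortcut-labeled edge relation on R is sound and complete: a shortcut edge labeled (q,q') from root a to root b exists iff there is a basic path in G from a to b realizing A_{q,q'} (with skull-decorated targets for shortcuts whose underlying basic path ends at an unnamed element in the subtree of the target). Then for all q, q' ∈ Q, a root a has a path realizing A_{q,q'} in G if and only if a has a path over shortcut edges realizing B_{q,q'} or B_{q,q'_skull}. -/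
/-- A basic root-to-root segment: a path from root `a` to root `b` whose
interior is unnamed, realising the NFA from `q` to `q'`. -/
def RootSeg {V Q A : Type} (R : Set V) (edge : V → A → V → Prop)
    (δ : Q → A → Q → Prop) (a : V) (q : Q) (b : V) (q' : Q) : Prop :=
  a ∈ R ∧ b ∈ R ∧ ∃ e qe, Relation.ReflTransGen (NStep R edge δ) (a, q) (e, qe) ∧
    AStep edge δ (e, qe) (b, q')

/-- A trailing segment: a path from root `a` realising the NFA from `q` to
`q'` whose elements after `a` are unnamed and which ends at an unnamed
element. -/
def TrailSeg {V Q A : Type} (R : Set V) (edge : V → A → V → Prop)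
    (δ : Q → A → Q → Prop) (a : V) (q q' : Q) : Prop :=
  a ∈ R ∧ ∃ e, e ∉ R ∧ Relation.ReflTransGen (NStep R edge δ) (a, q) (e, q')

/-- One step of the guided NFA `B` over shortcut edges: its states are
`Q ⊕ Q` (the right copy being the skull states, which have no outgoing
transitions). -/
def GStep {V Q : Type} (sc : V → Q → Q → Bool → V → Prop) :
    V × (Q ⊕ Q) → V × (Q ⊕ Q) → Prop := fun p p' =>
  match p, p' with
  | (a, Sum.inl q), (b, Sum.inl q') => sc a q q' false b
  | (a, Sum.inl q), (b, Sum.inr q') => sc a q q' true b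
  | _, _ => False

/-! An `A`-run from a root is cut at the roots it visits: between consecutive roots it is a basic
segment, i.e. a plain shortcut step of the guided NFA, and after the last root it is either empty
or a trailing segment, i.e. a final step into a skull state. Conversely every shortcut expands back
into an `A`-run, and skull states have no outgoing transitions, so a guided run can only enter one
at its last step. -/

open Relation

section

variable {V Q A : Type} {R : Set V} {edge : V → A → V → Prop} {δ : Q → A → Q → Prop}

def RootStep (R : Set V) (edge : V → A → V → Prop) (δ : Q → A → Q → Prop) :
    V × Q → V × Q → Prop :=
  fun u v => RootSeg R edge δ u.1 u.2 v.1 v.2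

theorem reflTransGen_aStep_of_nStep {u v : V × Q} (h : ReflTransGen (NStep R edge δ) u v) :
    ReflTransGen (AStep edge δ) u v :=
  ReflTransGen.mono (fun _ _ hs => hs.1) _ _ h

theorem RootSeg.reflTransGen_aStep {a b : V} {q q' : Q} (h : RootSeg R edge δ a q b q') :
    ReflTransGen (AStep edge δ) (a, q) (b, q') := by
  obtain ⟨-, -, _, _, hpath, hlast⟩ := h
  exact (reflTransGen_aStep_of_nStep hpath).tail hlast

theorem TrailSeg.exists_reflTransGen_aStep {a : V} {q q' : Q} (h : TrailSeg R edge δ a q q') :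
    ∃ e, ReflTransGen (AStep edge δ) (a, q) (e, q') := by
  obtain ⟨-, e, -, hpath⟩ := h
  exact ⟨e, reflTransGen_aStep_of_nStep hpath⟩

theorem reflTransGen_aStep_of_rootStep {u v : V × Q}
    (h : ReflTransGen (RootStep R edge δ) u v) : ReflTransGen (AStep edge δ) u v :=
  ReflTransGen.lift' id (fun _ _ hs => RootSeg.reflTransGen_aStep hs) _ _ h

theorem exists_reflTransGen_rootStep_nStep {a : V} {q : Q} {v : V × Q} (ha : a ∈ R)
    (h : ReflTransGen (AStep edge δ) (a, q) v) :
    ∃ c p, c ∈ R ∧ ReflTransGen (RootStep R edge δ) (a, q) (c, p) ∧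
      ReflTransGen (NStep R edge δ) (c, p) v := by
  induction h with
  | refl => exact ⟨a, q, ha, .refl, .refl⟩
  | @tail w z _ hwz ih =>
    obtain ⟨c, p, hc, hroots, htail⟩ := ih
    by_cases hz : z.1 ∈ R
    · exact ⟨z.1, z.2, hz, hroots.tail ⟨hc, hz, w.1, w.2, htail, hwz⟩, .refl⟩
    · exact ⟨c, p, hc, hroots, htail.tail ⟨hwz, hz⟩⟩

end

section

variable {V Q : Type} {sc : V → Q → Q → Bool → V → Prop}

def ShortcutStep (sc : V → Q → Q → Bool → V → Prop) : V × Q → V × Q → Prop :=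
  fun u v => sc u.1 u.2 v.2 false v.1

theorem shortcutStep_eq_rootStep {A : Type} {R : Set V} {edge : V → A → V → Prop}
    {δ : Q → A → Q → Prop} (hsc : ∀ a b q q', sc a q q' false b ↔ RootSeg R edge δ a q b q') :
    ShortcutStep sc = RootStep R edge δ := by
  ext u v
  exact hsc u.1 v.1 u.2 v.2

theorem reflTransGen_shortcutStep_of_gStep {a : V} {q : Q} {z : V × (Q ⊕ Q)}
    (h : ReflTransGen (GStep sc) (a, .inl q) z) :
    ∀ p, z.2 = .inl p → ReflTransGen (ShortcutStep sc) (a, q) (z.1, p) := by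
  induction h with
  | refl =>
    rintro p ⟨⟩
    exact .refl
  | @tail w z _ hwz ih =>
    obtain ⟨c, r | r⟩ := w
    · obtain ⟨b, y⟩ := z
      rintro p ⟨⟩
      exact (ih r rfl).tail hwz
    · exact hwz.elim

theorem reflTransGen_gStep_inl_iff {a b : V} {q p : Q} :
    ReflTransGen (GStep sc) (a, .inl q) (b, .inl p) ↔
      ReflTransGen (ShortcutStep sc) (a, q) (b, p) :=
  ⟨fun h => reflTransGen_shortcutStep_of_gStep h p rfl,
    fun h => ReflTransGen.lift (p := GStep sc) (fun u : V × Q => (u.1, Sum.inl u.2))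
      (fun _ _ hs => hs) _ _ h⟩

theorem exists_of_reflTransGen_gStep_inr {a b : V} {q p : Q}
    (h : ReflTransGen (GStep sc) (a, .inl q) (b, .inr p)) :
    ∃ c r, ReflTransGen (ShortcutStep sc) (a, q) (c, r) ∧ sc c r p true b := by
  obtain h | ⟨⟨c, r | r⟩, hpre, hlast⟩ := h.cases_tail
  · cases h
  · exact ⟨c, r, reflTransGen_gStep_inl_iff.1 hpre, hlast⟩
  · exact hlast.elim

end

theorem stmt8_general {V Q A : Type} (R : Set V)
    (edge : V → A → V → Prop) (δ : Q → A → Q → Prop)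
    (sc : V → Q → Q → Bool → V → Prop)
    (hsc_false : ∀ a b q q', sc a q q' false b ↔ RootSeg R edge δ a q b q')
    (hsc_true : ∀ a q q', (∃ b, sc a q q' true b) ↔ TrailSeg R edge δ a q q') :
    ∀ a ∈ R, ∀ q q' : Q,
      SatA edge δ a q q' ↔
        ∃ (b : V) (x : Q ⊕ Q),
          Relation.ReflTransGen (GStep sc) (a, Sum.inl q) (b, x) ∧
            (x = Sum.inl q' ∨ x = Sum.inr q') := by
  intro a ha q q'
  have hshort := shortcutStep_eq_rootStep hsc_false
  constructor
  · rintro ⟨e, hrun⟩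
    obtain ⟨c, p, hc, hroots, htail⟩ := exists_reflTransGen_rootStep_nStep ha hrun
    have hguided : ReflTransGen (GStep sc) (a, .inl q) (c, .inl p) := by
      rwa [reflTransGen_gStep_inl_iff, hshort]
    obtain h | ⟨_, -, hlast⟩ := htail.cases_tail
    · cases h
      exact ⟨_, .inl q', hguided, .inl rfl⟩
    · obtain ⟨b, hskull⟩ := (hsc_true c p q').2 ⟨hc, e, hlast.2, htail⟩
      exact ⟨b, .inr q', hguided.tail hskull, .inr rfl⟩
  · rintro ⟨b, x, hguided, rfl | rfl⟩
    · rw [reflTransGen_gStep_inl_iff, hshort] at hguided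
      exact ⟨b, reflTransGen_aStep_of_rootStep hguided⟩
    · obtain ⟨c, r, hroots, hskull⟩ := exists_of_reflTransGen_gStep_inr hguided
      rw [hshort] at hroots
      obtain ⟨e, hrun⟩ := ((hsc_true c r q').1 ⟨b, hskull⟩).exists_reflTransGen_aStep
      exact ⟨e, (reflTransGen_aStep_of_rootStep hroots).trans hrun⟩

/-- Lemma 11 (main property of guided automata): if the shortcut edges on the
finite root set are sound and complete for basic segments (skull shortcuts
for segments ending at unnamed elements in the subtree of the target, which
is then a root), then reachability of the original NFA from a root coincides
with reachability of the guided NFA over the shortcut edges. -/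
theorem stmt8 {V Q A : Type} (R : Set V) (hRfin : R.Finite)
    (edge : V → A → V → Prop) (δ : Q → A → Q → Prop)
    (sc : V → Q → Q → Bool → V → Prop)
    (hsc_false : ∀ a b q q', sc a q q' false b ↔ RootSeg R edge δ a q b q')
    (hsc_true : ∀ a q q', (∃ b, sc a q q' true b) ↔ TrailSeg R edge δ a q q')
    (hsc_true_root : ∀ a b q q', sc a q q' true b → b ∈ R) :
    ∀ a ∈ R, ∀ q q' : Q,
      SatA edge δ a q q' ↔
        ∃ (b : V) (x : Q ⊕ Q),
          Relation.ReflTransGen (GStep sc) (a, Sum.inl q) (b, x) ∧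
            (x = Sum.inl q' ∨ x = Sum.inr q') :=
  stmt8_general R edge δ sc hsc_false hsc_true
end

section
/- Let I be a quasi-forest, d a root of I, and r a binary relation on I satisfying the quasi-forest edge condition (every r-pair connects two roots, or has an endpoint that is a nominal root, or is a self-loop or parent-child pair). Then the set of r-successors of d is partitioned into three (pairwise disjoint up to the obvious overlaps) groups: (a) successors that are roots, (b) successors that are children of d, and (c), only if d is a nominal root, successors that are proper descendants of some root other than d or non-child descendants of d. In particular, if d is a root that is not a nominal root, then every r-successor of d is either a root or a child of d. -/
theorem IsChild.length_eq {d e : List ℕ} (h : IsChild d e) : e.length = d.length + 1 := by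
  obtain ⟨n, rfl⟩ := h
  simp

theorem NForest.exists_root_strictPrefix_s10 {F : Set (List ℕ)} (hF : NForest F) {e : List ℕ}
    (he : e ∈ F) (hroot : e ∉ RootsSet F) : ∃ c ∈ RootsSet F, StrictPrefix c e := by
  obtain ⟨a, t, rfl⟩ := List.exists_cons_of_ne_nil (hF.1 e he)
  have hpre : [a] <+: a :: t := ⟨t, rfl⟩
  refine ⟨[a], ⟨hF.2 _ he [a] (List.cons_ne_nil a []) hpre, rfl⟩, hpre, ?_⟩
  intro h
  exact hroot ⟨he, by rw [← h]; rfl⟩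

theorem EdgeCond.root_or_child_or_nominal {F O : Set (List ℕ)} {r : List ℕ → List ℕ → Prop}
    (hF : NForest F) (hO : O ⊆ RootsSet F) (hE : EdgeCond F O r) {d e : List ℕ}
    (hd : d ∈ RootsSet F) (he : e ∈ F) (hde : r d e) :
    e ∈ RootsSet F ∨ IsChild d e ∨ d ∈ O := by
  rcases hE d e hd.1 he hde with ⟨-, he_root⟩ | hdO | heO | rfl | hchild | hparent
  · exact .inl he_root
  · exact .inr (.inr hdO)
  · exact .inl (hO heO)
  · exact .inl hd
  · exact .inr (.inl hchild)
  · -- a root has length 1, so its parent would be the empty word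
    have hlen := hparent.length_eq
    rw [hd.2] at hlen
    exact absurd (List.length_eq_zero_iff.mp (by omega)) (hF.1 e he)

theorem NForest.root_or_child_or_descendant {F : Set (List ℕ)} (hF : NForest F)
    {d e : List ℕ} (he : e ∈ F) :
    e ∈ RootsSet F ∨ IsChild d e ∨
      (∃ c ∈ RootsSet F, c ≠ d ∧ StrictPrefix c e) ∨ (StrictPrefix d e ∧ ¬ IsChild d e) := by
  by_cases hroot : e ∈ RootsSet F
  · exact .inl hroot
  by_cases hchild : IsChild d e
  · exact .inr (.inl hchild)
  obtain ⟨c, hc, hce⟩ := hF.exists_root_strictPrefix_s10 he hroot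
  by_cases hcd : c = d
  · exact .inr (.inr (.inr ⟨hcd ▸ hce, hchild⟩))
  · exact .inr (.inr (.inl ⟨c, hc, hcd, hce⟩))

/-- Localisation of counting: every `r`-successor of a root `d` is a root, a
child of `d`, or (only when `d` is a nominal root) a proper descendant of some
other root, or a non-child proper descendant of `d`.  In particular, if `d`
is not a nominal root then every `r`-successor is a root or a child of `d`. -/
theorem stmt10 (F O : Set (List ℕ)) (r : List ℕ → List ℕ → Prop)
    (hF : NForest F) (hO : O ⊆ RootsSet F) (hE : EdgeCond F O r)
    (d : List ℕ) (hd : d ∈ RootsSet F) :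
    (∀ e, e ∈ F → r d e →
      e ∈ RootsSet F ∨ IsChild d e ∨
        (d ∈ O ∧ ((∃ c ∈ RootsSet F, c ≠ d ∧ StrictPrefix c e) ∨
          (StrictPrefix d e ∧ ¬ IsChild d e)))) ∧
    (d ∉ O → ∀ e, e ∈ F → r d e → e ∈ RootsSet F ∨ IsChild d e) := by
  refine ⟨fun e he hde => ?_, fun hdO e he hde => ?_⟩
  · rcases hE.root_or_child_or_nominal hF hO hd he hde with h | h | hdO
    · exact .inl h
    · exact .inr (.inl h)
    rcases hF.root_or_child_or_descendant (d := d) he with h | h | h | h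
    · exact .inl h
    · exact .inr (.inl h)
    · exact .inr (.inr ⟨hdO, .inl h⟩)
    · exact .inr (.inr ⟨hdO, .inr h⟩)
  · exact (hE.root_or_child_or_nominal hF hO hd he hde).imp_right (·.resolve_right hdO)
end

section
/- Let d be a non-nominal root of a quasi-forest with counting decoration: d has exactly c_cl many r-successors among the roots and exactly c_ch many r-successors among its children (and no other r-successors). Then d satisfies the number restriction (≥ n r).⊤, i.e., has at least n r-successors, if and only if c_cl + c_ch ≥ n. -/
theorem not_isChild_of_mem_roots {F : Set (List ℕ)} {d e : List ℕ}
    (hd : d ∈ RootsSet F) (he : e ∈ RootsSet F) : ¬IsChild d e := fun h => by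
  have := h.length_eq
  rw [hd.2, he.2] at this
  omega

theorem not_isChild_root {F : Set (List ℕ)} (hF : NForest F) {d e : List ℕ}
    (hd : d ∈ RootsSet F) (he : e ∈ F) : ¬IsChild e d := fun h => by
  have hlen := h.length_eq
  have he0 : e.length ≠ 0 := fun h0 => hF.1 e he (List.length_eq_zero_iff.mp h0)
  rw [hd.2] at hlen
  omega

theorem mem_roots_or_isChild_of_edge {F O : Set (List ℕ)} {r : List ℕ → List ℕ → Prop}
    (hF : NForest F) (hO : O ⊆ RootsSet F) (hE : EdgeCond F O r)
    {d e : List ℕ} (hd : d ∈ RootsSet F) (hdO : d ∉ O) (he : e ∈ F) (hre : r d e) :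
    e ∈ RootsSet F ∨ IsChild d e := by
  rcases hE d e hd.1 he hre with ⟨_, h⟩ | h | h | rfl | h | h
  · exact .inl h
  · exact absurd h hdO
  · exact .inl (hO h)
  · exact .inl hd
  · exact .inr h
  · exact absurd h (not_isChild_root hF hd he)

/-- Virtual satisfaction of number restrictions at non-nominal roots: a
non-nominal root `d` with exactly `ccl` `r`-successors among the roots and
exactly `cch` `r`-successors among its children has at least `n`
`r`-successors iff `ccl + cch ≥ n`. -/
theorem stmt11 (F O : Set (List ℕ)) (r : List ℕ → List ℕ → Prop)
    (hF : NForest F) (hO : O ⊆ RootsSet F) (hE : EdgeCond F O r)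
    (d : List ℕ) (hd : d ∈ RootsSet F) (hdO : d ∉ O)
    (hsub : ∀ e, r d e → e ∈ F) (hfin : {e | r d e}.Finite)
    (ccl cch n : ℕ)
    (hcl : {e | r d e ∧ e ∈ RootsSet F}.ncard = ccl)
    (hch : {e | r d e ∧ IsChild d e}.ncard = cch) :
    n ≤ {e | r d e}.ncard ↔ n ≤ ccl + cch := by
  have hsplit : {e | r d e} = {e | r d e ∧ e ∈ RootsSet F} ∪ {e | r d e ∧ IsChild d e} := by
    ext e
    simp only [Set.mem_ofPred_eq, Set.mem_union, ← and_or_left]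
    exact ⟨fun hre => ⟨hre, mem_roots_or_isChild_of_edge hF hO hE hd hdO (hsub e hre) hre⟩,
      And.left⟩
  have hdisj : Disjoint {e | r d e ∧ e ∈ RootsSet F} {e | r d e ∧ IsChild d e} :=
    Set.disjoint_left.mpr fun _ hroot hchild => not_isChild_of_mem_roots hd hroot.2 hchild.2
  rw [hsplit, Set.ncard_union_eq hdisj (hfin.subset fun _ => And.left)
    (hfin.subset fun _ => And.left), hcl, hch]
end

section
/- Let o be a nominal root of a quasi-forest, r a role satisfying the quasi-forest edge condition, and suppose o has exactly c_cl r-successors among the roots, exactly c_ch r-successors among its children, and for each root a exactly c_a r-successors that are proper descendants of a but not children of o. Then o has at least n r-successors if and only if c_cl + c_ch + Σ_a c_a ≥ n. -/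
/-!
Every `r`-successor `e` of `o` lies in the forest, so it is a nonempty word. Either it has length
one (a root), or it is a child of `o`, or it is a proper descendant of the root `e.take 1` that is
not a child of `o`. Children of `o` have length two, so the first two classes are disjoint, and
the third splits along the map `e ↦ e.take 1` into the subtrees of the roots.
-/

theorem NForest.take_one_mem_rootsSet {F : Set (List ℕ)} (hF : NForest F) {w : List ℕ}
    (hw : w ∈ F) : w.take 1 ∈ RootsSet F := by
  have hlen : 0 < w.length := List.length_pos_iff.mpr (hF.1 w hw)
  refine ⟨hF.2 w hw _ ?_ (List.take_prefix 1 w), by simp; omega⟩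
  exact List.length_pos_iff.mp (by simp; omega)

theorem strictPrefix_iff_of_length_eq_one {a e : List ℕ} (ha : a.length = 1) :
    StrictPrefix a e ↔ e.take 1 = a ∧ 1 < e.length := by
  rw [StrictPrefix, List.prefix_iff_eq_take, ha]
  constructor
  · rintro ⟨rfl, hne⟩
    refine ⟨rfl, ?_⟩
    by_contra! h
    exact hne (List.take_of_length_le h)
  · rintro ⟨rfl, hlt⟩
    refine ⟨rfl, fun h => ?_⟩
    have := congrArg List.length h
    simp at this
    omega

theorem Set.ncard_setOf_and_eq_card_filter {α : Type*} {p q : α → Prop} [DecidablePred q]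
    (h : {x | p x}.Finite) : {x | p x ∧ q x}.ncard = (h.toFinset.filter q).card := by
  rw [← Set.ncard_coe_finset]
  congr
  ext
  simp

theorem NForest.card_eq_card_roots_add_card_children_add_sum {F : Set (List ℕ)}
    (hF : NForest F) (hRfin : (RootsSet F).Finite) {o : List ℕ} (ho : o.length = 1)
    (T : Finset (List ℕ)) (hT : ∀ e ∈ T, e ∈ F) [DecidablePred (· ∈ RootsSet F)]
    [DecidablePred (IsChild o)] [∀ a, DecidablePred (StrictPrefix a)] :
    T.card = (T.filter (· ∈ RootsSet F)).card + (T.filter (IsChild o)).card +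
      ∑ a ∈ hRfin.toFinset, (T.filter (fun e => StrictPrefix a e ∧ ¬ IsChild o e)).card := by
  set N := T.filter (· ∉ RootsSet F)
  have hchildren : N.filter (IsChild o) = T.filter (IsChild o) := by
    rw [Finset.filter_filter]
    refine Finset.filter_congr fun e _ => and_iff_right_of_imp fun hc hroot => ?_
    have := hc.length_eq
    have := hroot.2
    omega
  have hdesc : (N.filter (¬ IsChild o ·)).card =
      ∑ a ∈ hRfin.toFinset, (T.filter (fun e => StrictPrefix a e ∧ ¬ IsChild o e)).card := by
    rw [Finset.card_eq_sum_card_fiberwise (f := List.take 1) (t := hRfin.toFinset)]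
    · refine Finset.sum_congr rfl fun a ha => congrArg Finset.card ?_
      have ha := (hRfin.mem_toFinset.mp ha).2
      ext e
      simp only [N, Finset.mem_filter, strictPrefix_iff_of_length_eq_one ha]
      constructor
      · rintro ⟨⟨⟨heT, hroot⟩, hc⟩, rfl⟩
        refine ⟨heT, ⟨rfl, ?_⟩, hc⟩
        have hpos := List.length_pos_iff.mpr (hF.1 e (hT e heT))
        have hne : e.length ≠ 1 := fun h => hroot ⟨hT e heT, h⟩
        omega
      · rintro ⟨heT, ⟨rfl, hlt⟩, hc⟩
        refine ⟨⟨⟨heT, fun hroot => ?_⟩, hc⟩, rfl⟩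
        have := hroot.2
        omega
    · intro e he
      simp only [N, Finset.mem_coe, Finset.mem_filter] at he
      exact hRfin.mem_toFinset.mpr (hF.take_one_mem_rootsSet (hT e he.1.1))
  rw [← hdesc, ← hchildren, add_assoc, Finset.card_filter_add_card_filter_not,
    Finset.card_filter_add_card_filter_not]

theorem stmt12_general (F O : Set (List ℕ)) (r : List ℕ → List ℕ → Prop)
    (hF : NForest F) (hO : O ⊆ RootsSet F)
    (hRfin : (RootsSet F).Finite)
    (o : List ℕ) (ho : o ∈ O)
    (hsub : ∀ e, r o e → e ∈ F) (hfin : {e | r o e}.Finite)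
    (ccl cch n : ℕ) (c : List ℕ → ℕ)
    (hcl : {e | r o e ∧ e ∈ RootsSet F}.ncard = ccl)
    (hch : {e | r o e ∧ IsChild o e}.ncard = cch)
    (hc : ∀ a ∈ RootsSet F,
      c a = {e | r o e ∧ StrictPrefix a e ∧ ¬ IsChild o e}.ncard) :
    n ≤ {e | r o e}.ncard ↔ n ≤ ccl + cch + ∑ a ∈ hRfin.toFinset, c a := by
  classical
  have hcount := hF.card_eq_card_roots_add_card_children_add_sum hRfin (hO ho).2 hfin.toFinset
    fun e he => hsub e (hfin.mem_toFinset.mp he)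
  have hdesc : ∑ a ∈ hRfin.toFinset, c a = ∑ a ∈ hRfin.toFinset,
      (hfin.toFinset.filter fun e => StrictPrefix a e ∧ ¬ IsChild o e).card :=
    Finset.sum_congr rfl fun a ha =>
      (hc a (hRfin.mem_toFinset.mp ha)).trans (Set.ncard_setOf_and_eq_card_filter hfin)
  rw [Set.ncard_eq_toFinset_card _ hfin, hcount, hdesc, ← hcl, ← hch,
    Set.ncard_setOf_and_eq_card_filter hfin, Set.ncard_setOf_and_eq_card_filter hfin]

/-- Virtual satisfaction of number restrictions at nominal roots (Lemma 15):
a nominal root `o` with exactly `ccl` `r`-successors among the roots, exactly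
`cch` among its children, and for each root `a` exactly `c a` among the
non-child proper descendants of `a` has at least `n` `r`-successors iff
`ccl + cch + Σ_a c a ≥ n`. -/
theorem stmt12 (F O : Set (List ℕ)) (r : List ℕ → List ℕ → Prop)
    (hF : NForest F) (hO : O ⊆ RootsSet F) (hE : EdgeCond F O r)
    (hRfin : (RootsSet F).Finite)
    (o : List ℕ) (ho : o ∈ O)
    (hsub : ∀ e, r o e → e ∈ F) (hfin : {e | r o e}.Finite)
    (ccl cch n : ℕ) (c : List ℕ → ℕ)
    (hcl : {e | r o e ∧ e ∈ RootsSet F}.ncard = ccl)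
    (hch : {e | r o e ∧ IsChild o e}.ncard = cch)
    (hc : ∀ a ∈ RootsSet F,
      c a = {e | r o e ∧ StrictPrefix a e ∧ ¬ IsChild o e}.ncard) :
    n ≤ {e | r o e}.ncard ↔ n ≤ ccl + cch + ∑ a ∈ hRfin.toFinset, c a :=
  stmt12_general F O r hF hO hRfin o ho hsub hfin ccl cch n c hcl hch hc
end
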